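/- Let ξ : [0,∞) × ℝ³ → ℝ be transported by a measure-preserving flow (ξ(t, φ(t,x)) = ξ(0,x) with φ(t,·) volume-preserving bijections), with ξ(t,·) ≤ 1 everywhere and |supp ξ(t,·)| = |supp ξ(0,·)| ≤ 10. Suppose at time t, ξ(t,·) = 1 on a line segment of length ℓ ≥ c t on the axis {r = 0}. Then there exists z* ∈ ℝ and 0 < r* ≲ 1/√t such that ξ(t,(0,z*)) = 1 and ξ(t, x) = 0 for some point x at cylindrical radius r* and height z*, hence sup over the plane of |∂_r ξ(t,·)| ≳ √t if ξ(t,·) is C¹. -/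

import Mathlib

open MeasureTheory Real

/-- Small-scale creation for a transported, axisymmetric relative vorticity,
written in cylindrical coordinates `ξ = ξ(r, z)` at a fixed time `t`:
if `ξ ≤ 1`, the 3D volume of its support is at most `10`, and `ξ = 1` on a
segment of length `≥ c t` on the symmetry axis, then there is a point on the
axis where `ξ = 1` and a point at the same height `z*` at small radius
`r* ≲ 1/√t` where `ξ = 0`; if moreover `ξ` is differentiable in `r`, the radial
derivative is somewhere `≳ √t`. -/
theorem stmt18 (c : ℝ) (hc : 0 < c) :
    ∃ C : ℝ, 0 < C ∧
      ∀ (t : ℝ) (ξ : ℝ → ℝ → ℝ), 0 < t →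
        (∀ r z : ℝ, ξ r z ≤ 1) →
        (∫⁻ p in {p : ℝ × ℝ | 0 < p.1 ∧ ξ p.1 p.2 ≠ 0},
            ENNReal.ofReal (2 * π * p.1) ∂(volume : Measure (ℝ × ℝ))) ≤ 10 →
        (∃ z₁ ℓ : ℝ, c * t ≤ ℓ ∧ ∀ z ∈ Set.Icc z₁ (z₁ + ℓ), ξ 0 z = 1) →
        ((∃ z' r' : ℝ, 0 < r' ∧ r' ≤ C / Real.sqrt t ∧
            ξ 0 z' = 1 ∧ ξ r' z' = 0) ∧
          ((∀ z : ℝ, Differentiable ℝ fun s => ξ s z) →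
            ∃ r' z' : ℝ, (1 / C) * Real.sqrt t ≤
              |deriv (fun s => ξ s z') r'|)) := by
  have hπ : (0:ℝ) < π := Real.pi_pos
  set C : ℝ := Real.sqrt (21 / (π * c)) with hC_def
  have hCpos : 0 < C := Real.sqrt_pos.mpr (by positivity)
  have hCsq : C ^ 2 = 21 / (π * c) := Real.sq_sqrt (by positivity)
  refine ⟨C, hCpos, ?_⟩
  rintro t ξ ht hle hvol ⟨z₁, ℓ, hℓ, hax⟩
  have hst : 0 < Real.sqrt t := Real.sqrt_pos.mpr ht
  set ρ : ℝ := C / Real.sqrt t with hρdef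
  have hρpos : 0 < ρ := div_pos hCpos hst
  have hℓpos : 0 < ℓ := lt_of_lt_of_le (mul_pos hc ht) hℓ
  have hρsq : ρ ^ 2 = 21 / (π * c * t) := by
    rw [hρdef, div_pow, hCsq, Real.sq_sqrt ht.le]
    field_simp
  have key : ∃ z ∈ Set.Icc z₁ (z₁ + ℓ), ∃ r, 0 < r ∧ r ≤ ρ ∧ ξ r z = 0 := by
    by_contra h
    push_neg at h
    have hsub : (Set.Ioc (ρ/2) ρ ×ˢ Set.Icc z₁ (z₁ + ℓ)) ⊆
        {p : ℝ × ℝ | 0 < p.1 ∧ ξ p.1 p.2 ≠ 0} := by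
      rintro ⟨r, z⟩ ⟨hr, hz⟩
      have hr0 : 0 < r := lt_trans (by linarith) hr.1
      exact ⟨hr0, h z hz r hr0 hr.2⟩
    have h1 : (∫⁻ p in Set.Ioc (ρ/2) ρ ×ˢ Set.Icc z₁ (z₁+ℓ),
        ENNReal.ofReal (2 * π * p.1) ∂(volume : Measure (ℝ × ℝ))) ≤ 10 :=
      le_trans (lintegral_mono_set hsub) hvol
    have h2 : ENNReal.ofReal (π * ρ) * (volume (Set.Ioc (ρ/2) ρ ×ˢ Set.Icc z₁ (z₁+ℓ)))
        ≤ ∫⁻ p in Set.Ioc (ρ/2) ρ ×ˢ Set.Icc z₁ (z₁+ℓ),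
          ENNReal.ofReal (2 * π * p.1) ∂(volume : Measure (ℝ × ℝ)) := by
      rw [← setLIntegral_const]
      refine setLIntegral_mono
        (ENNReal.measurable_ofReal.comp (measurable_fst.const_mul (2 * π))) ?_
      rintro ⟨r, z⟩ ⟨hr, hz⟩
      exact ENNReal.ofReal_le_ofReal (by nlinarith [hr.1])
    have hvolA : volume (Set.Ioc (ρ/2) ρ ×ˢ Set.Icc z₁ (z₁+ℓ))
        = ENNReal.ofReal (ρ/2) * ENNReal.ofReal ℓ := by
      rw [MeasureTheory.Measure.volume_eq_prod, MeasureTheory.Measure.prod_prod,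
        Real.volume_Ioc, Real.volume_Icc, show ρ - ρ/2 = ρ/2 by ring,
        show z₁ + ℓ - z₁ = ℓ by ring]
    rw [hvolA] at h2
    have hmm : ENNReal.ofReal (π * ρ) * (ENNReal.ofReal (ρ/2) * ENNReal.ofReal ℓ)
        = ENNReal.ofReal (π * ρ * (ρ/2 * ℓ)) := by
      rw [← ENNReal.ofReal_mul (by positivity : (0:ℝ) ≤ ρ/2),
        ← ENNReal.ofReal_mul (by positivity : (0:ℝ) ≤ π * ρ)]
    have h3 : ENNReal.ofReal (π * ρ * (ρ/2 * ℓ)) ≤ 10 := by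
      rw [← hmm]; exact le_trans h2 h1
    have h4 : π * ρ * (ρ/2 * ℓ) ≤ 10 := by
      have h10 : (10 : ENNReal) = ENNReal.ofReal 10 := by norm_num
      rw [h10, ENNReal.ofReal_le_ofReal_iff (by norm_num)] at h3
      exact h3
    have h5 : (21:ℝ)/2 ≤ π * ρ * (ρ/2 * ℓ) := by
      have hρ2 : ρ * ρ = 21 / (π * c * t) := by nlinarith [hρsq]
      have heq : π * ρ * (ρ/2 * ℓ) = π * (ρ * ρ) * ℓ / 2 := by ring
      rw [heq, hρ2]
      have hct : 0 < π * c * t := by positivity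
      have heq2 : π * (21 / (π * c * t)) * ℓ / 2 = 21 * ℓ / (2 * (c * t)) := by
        field_simp
      rw [heq2, le_div_iff₀ (by positivity)]
      nlinarith [hℓ]
    linarith
  obtain ⟨z', hz', r', hr'pos, hr'le, hξ0⟩ := key
  have hax' : ξ 0 z' = 1 := hax z' hz'
  constructor
  · exact ⟨z', r', hr'pos, hr'le, hax', hξ0⟩
  · intro hdiff
    obtain ⟨ζ, hζ, hderiv⟩ := exists_deriv_eq_slope (fun s => ξ s z') hr'pos
      ((hdiff z').continuous.continuousOn) ((hdiff z').differentiableOn)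
    refine ⟨ζ, z', ?_⟩
    rw [hderiv]
    simp only [hξ0, hax']
    rw [show (0 - 1 : ℝ) / (r' - 0) = -(1/r') by ring, abs_neg,
      abs_of_nonneg (by positivity : (0:ℝ) ≤ 1/r')]
    rw [div_mul_eq_mul_div, one_mul, div_le_div_iff₀ hCpos hr'pos, one_mul]
    have h6 : r' * Real.sqrt t ≤ C := by
      rw [← le_div_iff₀ hst]
      exact hr'le
    nlinarith
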